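/- For every irrational x ∈ (0,1] and every n ≥ 1, with Σ-coding σ_j(x) = (h_j,(m_j,ε_j)): (1/2)·m_n·(h_n+1)·q_{ν_{n−1}(x)−1}(x) ≤ q_{ν_n(x)−1}(x) ≤ 6·m_n·(h_n+1)·q_{ν_{n−1}(x)−1}(x), and consequently (1/2ⁿ)·∏_{j=1}^{n} m_j·(h_j+1) ≤ q_{ν_n(x)−1}(x) ≤ 6ⁿ·∏_{j=1}^{n} m_j·(h_j+1) (here q_{ν_0(x)−1} = q_0 = 1). -/

import Mathlib

open MeasureTheory Filter

noncomputable section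

/-- The ECF digit `k` of a point `x ∈ (0,1]`: `x ∈ B(k,ξ)`. -/
def ecfK (x : ℝ) : ℕ := (⌊1/x⌋ + 1).toNat / 2

/-- The ECF digit `ξ` of a point `x ∈ (0,1]`. -/
def ecfXi (x : ℝ) : ℤ := if ⌊1/x⌋ % 2 = 0 then 1 else -1

/-- The ECF Gauss-like map `T(x) = ξ (1/x - 2k)` for `x ∈ B(k,ξ)`. -/
def ecfT (x : ℝ) : ℝ := (ecfXi x : ℝ) * (1/x - 2 * (ecfK x : ℝ))

/-- The domain: irrational points of `(0,1]`. -/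
def ECFdom : Set ℝ := {x | x ∈ Set.Ioc (0:ℝ) 1 ∧ Irrational x}

/-- The `n`-th ECF digit `k_n(x)` (for `n ≥ 1`). -/
def ecfDigK (x : ℝ) (n : ℕ) : ℕ := ecfK (ecfT^[n-1] x)

/-- The `n`-th ECF digit `ξ_n(x)` (for `n ≥ 1`), with the convention `ξ_0 = 1`. -/
def ecfDigXi (x : ℝ) (n : ℕ) : ℤ := if n = 0 then 1 else ecfXi (ecfT^[n-1] x)

/-- Numerators of continued fractions with even partial quotients built from digit
sequences `(k_n)_{n≥1}`, `(ξ_n)_{n≥0}`: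
`p_n = 2 k_n p_{n-1} + ξ_{n-1} p_{n-2}`, `p_0 = 0`, `p_{-1} = 1`. -/
def cfP (k : ℕ → ℕ) (ξ : ℕ → ℤ) : ℕ → ℤ
  | 0 => 0
  | 1 => ξ 0
  | (n+2) => 2 * (k (n+2) : ℤ) * cfP k ξ (n+1) + ξ (n+1) * cfP k ξ n

/-- Denominators: `q_n = 2 k_n q_{n-1} + ξ_{n-1} q_{n-2}`, `q_0 = 1`, `q_{-1} = 0`. -/
def cfQ (k : ℕ → ℕ) (ξ : ℕ → ℤ) : ℕ → ℤ
  | 0 => 1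
  | 1 => 2 * (k 1 : ℤ)
  | (n+2) => 2 * (k (n+2) : ℤ) * cfQ k ξ (n+1) + ξ (n+1) * cfQ k ξ n

/-- The ECF convergent numerators `p_n(x)`. -/
def ecfP (x : ℝ) : ℕ → ℤ := cfP (ecfDigK x) (ecfDigXi x)

/-- The ECF convergent denominators `q_n(x)`. -/
def ecfQ (x : ℝ) : ℕ → ℤ := cfQ (ecfDigK x) (ecfDigXi x)

/-- `τ(x) = min {j ≥ 0 : T^j(x) ∈ (0,1/2]}`. -/
def ecfTau (x : ℝ) : ℕ := sInf {j : ℕ | ecfT^[j] x ∈ Set.Ioc (0:ℝ) (1/2)}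

/-- The jump transformation `R(x) = T^{τ(x)+1}(x)`. -/
def ecfR (x : ℝ) : ℝ := ecfT^[ecfTau x + 1] x

/-- `ν_0(x) = 1`, `ν_n(x) = ν_{n-1}(x) + τ(R^{n-1}(x)) + 1`. -/
def ecfNu (x : ℝ) : ℕ → ℕ
  | 0 => 1
  | (n+1) => ecfNu x n + ecfTau (ecfR^[n] x) + 1

/-- The `R`-denominators: `q̂_0(x) = 1`, `q̂_n(x) = q_{ν_n(x)}(x)`. -/
def ecfQhat (x : ℝ) (n : ℕ) : ℤ := if n = 0 then 1 else ecfQ x (ecfNu x n)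

/-- The renewal time `n̂_L(x) = min {n ≥ 1 : q̂_n(x) > L}`. -/
def ecfNhat (x : ℝ) (L : ℝ) : ℕ := sInf {n : ℕ | 1 ≤ n ∧ L < (ecfQhat x n : ℝ)}

/-- The `R`-invariant probability measure `μ`, with density
`f(x) = (1/log 3)(1/(3-x) + 1/(1+x))` on `(0,1]`. -/
def ecfMu : Measure ℝ :=
  (volume.restrict (Set.Ioc 0 1)).withDensity
    (fun x => ENNReal.ofReal ((1/Real.log 3) * (1/(3-x) + 1/(1+x))))

/-- Σ-coding components: `h_n(x) = τ(R^{n-1}(x))`. -/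
def sigmaH (x : ℝ) (n : ℕ) : ℕ := ecfTau (ecfR^[n-1] x)

/-- Σ-coding components: `m_n(x) = k_{ν_n(x)-1}(x)`. -/
def sigmaM (x : ℝ) (n : ℕ) : ℕ := ecfDigK x (ecfNu x n - 1)

/-- Σ-coding components: `ε_n(x) = ξ_{ν_n(x)-1}(x)`. -/
def sigmaE (x : ℝ) (n : ℕ) : ℤ := ecfDigXi x (ecfNu x n - 1)

/-- The alphabet `Σ = ℕ₀ × ((ℕ × {±1}) ∖ {(1,-1)})`, as a subset of `ℕ × (ℕ × ℤ)`. -/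
def SigmaSymb : Set (ℕ × (ℕ × ℤ)) :=
  {s | 1 ≤ s.2.1 ∧ ((s.2.2 = 1 ∨ s.2.2 = -1) ∧ ¬(s.2.1 = 1 ∧ s.2.2 = -1))}

/-- The full Σ-coding `σ_n(x) = (h_n, (m_n, ε_n))`. -/
def sigmaCode (x : ℝ) (n : ℕ) : ℕ × (ℕ × ℤ) := (sigmaH x n, (sigmaM x n, sigmaE x n))

end

/-! On `(1/2, 1)` the map `T` is `z ↦ 2 - 1/z`, which the change of variable `z ↦ 1/(1 - z)`
conjugates to the translation by `-1`; hence every orbit enters `(0, 1/2]` and `τ` is finite.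

A block of the Σ-coding consists of `h` digits `(1,-1)` followed by `(m, ε)`. Along the digits
`(1,-1)` the recursion reads `q_{j+1} = 2 q_j - q_{j-1}`, so the denominators form an arithmetic
progression whose difference `q_{a+1} - q_a = q_a + ξ_a q_{a-1}` lies between `2 q_a / 3` and
`2 q_a`: a block never starts right after a digit `(1,-1)`, so `ξ_a = -1` forces `k_a ≥ 2` and
`q_{a-1} ≤ q_a / 3`. Thus `q_{a+h}` is comparable to `(h + 1) q_a`, and the last digit multiplies
it by a factor between `2m - 1` and `2m + 1`. The product bounds follow by telescoping. -/

section OneStep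

variable {x : ℝ}

lemma ecfXi_eq_one_or_eq_neg_one (x : ℝ) : ecfXi x = 1 ∨ ecfXi x = -1 := by
  unfold ecfXi
  split_ifs <;> simp

lemma floor_one_div_cases (hx : 1 ≤ ⌊1/x⌋) :
    (⌊1/x⌋ = 2 * ecfK x ∧ ecfXi x = 1) ∨ (⌊1/x⌋ = 2 * ecfK x - 1 ∧ ecfXi x = -1) := by
  unfold ecfK ecfXi
  rcases Int.emod_two_eq_zero_or_one ⌊1/x⌋ with h | h
  · exact Or.inl ⟨by omega, if_pos h⟩
  · exact Or.inr ⟨by omega, if_neg (by omega)⟩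

lemma one_le_floor_one_div (hx : x ∈ Set.Ioc (0:ℝ) 1) : 1 ≤ ⌊1/x⌋ := by
  rw [Int.le_floor, Int.cast_one, le_div_iff₀ hx.1, one_mul]
  exact hx.2

lemma one_le_ecfK (hx : x ∈ Set.Ioc (0:ℝ) 1) : 1 ≤ ecfK x := by
  have h := one_le_floor_one_div hx
  rcases floor_one_div_cases h with ⟨h', -⟩ | ⟨h', -⟩ <;> omega

lemma ecfT_eq_fract_or_one_sub_fract (hx : 1 ≤ ⌊1/x⌋) :
    ecfT x = Int.fract (1/x) ∨ ecfT x = 1 - Int.fract (1/x) := by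
  rcases floor_one_div_cases hx with ⟨h, hξ⟩ | ⟨h, hξ⟩
  · left
    rw [ecfT, hξ, Int.fract, h]
    push_cast
    ring
  · right
    rw [ecfT, hξ, Int.fract, h]
    push_cast
    ring

lemma ecfT_mem_ECFdom (hx : x ∈ ECFdom) : ecfT x ∈ ECFdom := by
  have hirr : Irrational (Int.fract (1/x)) := by
    rw [Int.fract, one_div]
    exact hx.2.inv.sub_intCast _
  have h0 := Int.fract_nonneg (1/x)
  have h1 := Int.fract_lt_one (1/x)
  rcases ecfT_eq_fract_or_one_sub_fract (one_le_floor_one_div hx.1) with h | h <;> rw [h]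
  · exact ⟨⟨lt_of_le_of_ne h0 hirr.ne_zero.symm, h1.le⟩, hirr⟩
  · exact ⟨⟨by linarith, by linarith⟩, by simpa using hirr.intCast_sub 1⟩

lemma lt_one_of_mem_ECFdom (hx : x ∈ ECFdom) : x < 1 :=
  lt_of_le_of_ne hx.1.2 hx.2.ne_one

lemma ecfK_eq_one_of_one_half_lt (h : 1/2 < x) (hx : x < 1) : ecfK x = 1 ∧ ecfXi x = -1 := by
  have hx0 : 0 < x := by linarith
  have hfl : ⌊1/x⌋ = 1 := by
    rw [Int.floor_eq_iff, Int.cast_one, le_div_iff₀ hx0, div_lt_iff₀ hx0]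
    constructor <;> linarith
  rcases floor_one_div_cases hfl.ge with ⟨h, -⟩ | ⟨h, hξ⟩
  · omega
  · exact ⟨by omega, hξ⟩

lemma ecfT_of_one_half_lt (h : 1/2 < x) (hx : x < 1) : ecfT x = 2 - 1/x := by
  obtain ⟨hk, hξ⟩ := ecfK_eq_one_of_one_half_lt h hx
  rw [ecfT, hk, hξ]
  push_cast
  ring

lemma two_le_ecfK_of_ecfXi_eq_neg_one (hx0 : 0 < x) (hx : x ≤ 1/2) (hξ : ecfXi x = -1) :
    2 ≤ ecfK x := by
  have h2 : 2 ≤ ⌊1/x⌋ := by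
    rw [Int.le_floor, le_div_iff₀ hx0]
    push_cast
    linarith
  rcases floor_one_div_cases (by omega : 1 ≤ ⌊1/x⌋) with ⟨-, h⟩ | ⟨h, -⟩
  · rw [hξ] at h
    norm_num at h
  · omega

end OneStep

section Orbit

variable {x : ℝ}

lemma iterate_ecfT_mem_ECFdom (hx : x ∈ ECFdom) (j : ℕ) : ecfT^[j] x ∈ ECFdom :=
  Set.MapsTo.iterate (fun _ => ecfT_mem_ECFdom) j hx

lemma exists_iterate_ecfT_mem_Ioc (hx : x ∈ ECFdom) :
    ∃ j, ecfT^[j] x ∈ Set.Ioc (0:ℝ) (1/2) := by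
  by_contra! hbig
  have hlarge (j : ℕ) : 1/2 < ecfT^[j] x ∧ ecfT^[j] x < 1 := by
    have hj := iterate_ecfT_mem_ECFdom hx j
    exact ⟨lt_of_not_ge fun h => hbig j ⟨hj.1.1, h⟩, lt_one_of_mem_ECFdom hj⟩
  have hshift (j : ℕ) : (1 - ecfT^[j] x)⁻¹ = (1 - x)⁻¹ - j := by
    induction j with
    | zero => simp
    | succ j ih =>
      obtain ⟨h1, h2⟩ := hlarge j
      have hy0 : ecfT^[j] x ≠ 0 := by linarith
      have hy1 : 1 - ecfT^[j] x ≠ 0 := by linarith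
      rw [Function.iterate_succ_apply', ecfT_of_one_half_lt h1 h2, Nat.cast_succ, ← sub_sub, ← ih,
        show 1 - (2 - 1 / ecfT^[j] x) = (1 - ecfT^[j] x) / ecfT^[j] x by field_simp; ring, inv_div]
      field_simp
      ring
  obtain ⟨N, hN⟩ := exists_nat_gt (1 - x)⁻¹
  have hpos : 0 < (1 - ecfT^[N] x)⁻¹ := inv_pos.mpr (by linarith [(hlarge N).2])
  linarith [hshift N]

lemma iterate_ecfTau_mem_Ioc (hx : x ∈ ECFdom) : ecfT^[ecfTau x] x ∈ Set.Ioc (0:ℝ) (1/2) :=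
  Nat.sInf_mem (exists_iterate_ecfT_mem_Ioc hx)

lemma one_half_lt_iterate_of_lt_ecfTau (hx : x ∈ ECFdom) {j : ℕ} (hj : j < ecfTau x) :
    1/2 < ecfT^[j] x :=
  lt_of_not_ge fun h => Nat.notMem_of_lt_sInf hj ⟨(iterate_ecfT_mem_ECFdom hx j).1.1, h⟩

lemma one_le_ecfNu (x : ℝ) (n : ℕ) : 1 ≤ ecfNu x n := by
  cases n <;> simp [ecfNu]

lemma iterate_ecfR_eq (x : ℝ) (n : ℕ) : ecfR^[n] x = ecfT^[ecfNu x n - 1] x := by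
  induction n with
  | zero => rfl
  | succ n ih =>
    have := one_le_ecfNu x n
    rw [Function.iterate_succ_apply']
    show ecfT^[ecfTau (ecfR^[n] x) + 1] (ecfR^[n] x)
      = ecfT^[ecfNu x n + ecfTau (ecfR^[n] x) + 1 - 1] x
    rw [ih, ← Function.iterate_add_apply]
    congr 1
    omega

lemma iterate_ecfR_mem_ECFdom (hx : x ∈ ECFdom) (n : ℕ) : ecfR^[n] x ∈ ECFdom :=
  iterate_ecfR_eq x n ▸ iterate_ecfT_mem_ECFdom hx _

lemma iterate_ecfT_ecfNu_sub_one_add (x : ℝ) (n i : ℕ) :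
    ecfT^[ecfNu x n - 1 + i] x = ecfT^[i] (ecfR^[n] x) := by
  rw [iterate_ecfR_eq, ← Function.iterate_add_apply, add_comm]

lemma ecfNu_succ_sub_one (x : ℝ) (n : ℕ) :
    ecfNu x (n+1) - 1 = ecfNu x n - 1 + ecfTau (ecfR^[n] x) + 1 := by
  have := one_le_ecfNu x n
  simp only [ecfNu]
  omega

end Orbit

section Digits

variable {x : ℝ}

lemma one_le_ecfDigK (hx : x ∈ ECFdom) (j : ℕ) : 1 ≤ ecfDigK x j :=
  one_le_ecfK (iterate_ecfT_mem_ECFdom hx _).1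

lemma ecfDigXi_eq_one_or_eq_neg_one (x : ℝ) (j : ℕ) : ecfDigXi x j = 1 ∨ ecfDigXi x j = -1 := by
  unfold ecfDigXi
  split_ifs
  · exact Or.inl rfl
  · exact ecfXi_eq_one_or_eq_neg_one _

lemma ecfDigK_succ (x : ℝ) (j : ℕ) : ecfDigK x (j+1) = ecfK (ecfT^[j] x) := rfl

lemma ecfDigXi_succ (x : ℝ) (j : ℕ) : ecfDigXi x (j+1) = ecfXi (ecfT^[j] x) := rfl

lemma ecfDigK_ecfDigXi_of_lt_ecfTau (hx : x ∈ ECFdom) (n : ℕ) {i : ℕ}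
    (hi : i < ecfTau (ecfR^[n] x)) :
    ecfDigK x (ecfNu x n - 1 + i + 1) = 1 ∧ ecfDigXi x (ecfNu x n - 1 + i + 1) = -1 := by
  have hR := iterate_ecfR_mem_ECFdom hx n
  rw [ecfDigK_succ, ecfDigXi_succ, iterate_ecfT_ecfNu_sub_one_add]
  exact ecfK_eq_one_of_one_half_lt (one_half_lt_iterate_of_lt_ecfTau hR hi)
    (lt_one_of_mem_ECFdom (iterate_ecfT_mem_ECFdom hR i))

lemma two_le_ecfDigK_of_ecfDigXi_eq_neg_one (hx : x ∈ ECFdom) (n : ℕ)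
    (hξ : ecfDigXi x (ecfNu x n - 1) = -1) : 2 ≤ ecfDigK x (ecfNu x n - 1) := by
  cases n with
  | zero => simp [ecfNu, ecfDigXi] at hξ
  | succ n =>
    rw [ecfNu_succ_sub_one, ecfDigXi_succ, iterate_ecfT_ecfNu_sub_one_add] at hξ
    rw [ecfNu_succ_sub_one, ecfDigK_succ, iterate_ecfT_ecfNu_sub_one_add]
    have hmem := iterate_ecfTau_mem_Ioc (iterate_ecfR_mem_ECFdom hx n)
    exact two_le_ecfK_of_ecfXi_eq_neg_one hmem.1 hmem.2 hξ

end Digits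

section Denominators

variable {k : ℕ → ℕ} {ξ : ℕ → ℤ}

lemma cfQ_add_two (k : ℕ → ℕ) (ξ : ℕ → ℤ) (j : ℕ) :
    cfQ k ξ (j+2) = 2 * k (j+2) * cfQ k ξ (j+1) + ξ (j+1) * cfQ k ξ j := rfl

lemma cfQ_nonneg_and_le_succ (hk : ∀ j, 1 ≤ k j) (hξ : ∀ j, ξ j = 1 ∨ ξ j = -1) :
    ∀ j, 0 ≤ cfQ k ξ j ∧ cfQ k ξ j ≤ cfQ k ξ (j+1)
  | 0 => by
    have := hk 1
    simp only [cfQ]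
    omega
  | j+1 => by
    obtain ⟨h0, h1⟩ := cfQ_nonneg_and_le_succ hk hξ j
    have := hk (j+2)
    rw [cfQ_add_two]
    refine ⟨by omega, ?_⟩
    rcases hξ (j+1) with h | h <;> rw [h] <;> nlinarith

lemma cfQ_succ_bounds (hk : ∀ j, 1 ≤ k j) (hξ : ∀ j, ξ j = 1 ∨ ξ j = -1) (j : ℕ) :
    (2 * k (j+1) - 1) * cfQ k ξ j ≤ cfQ k ξ (j+1) ∧
      cfQ k ξ (j+1) ≤ (2 * k (j+1) + 1) * cfQ k ξ j := by
  cases j with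
  | zero =>
    simp only [cfQ]
    constructor <;> linarith
  | succ j =>
    obtain ⟨h0, h1⟩ := cfQ_nonneg_and_le_succ hk hξ j
    rw [cfQ_add_two]
    rcases hξ (j+1) with h | h <;> rw [h] <;> constructor <;> linarith

lemma cfQ_succ_lower_of_admissible (hk : ∀ j, 1 ≤ k j) (hξ : ∀ j, ξ j = 1 ∨ ξ j = -1) {j : ℕ}
    (hadm : ξ j = -1 → 2 ≤ k j) :
    (6 * k (j+1) - 1) * cfQ k ξ j ≤ 3 * cfQ k ξ (j+1) := by
  cases j with
  | zero =>
    simp only [cfQ]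
    linarith
  | succ j =>
    obtain ⟨h0, h1⟩ := cfQ_nonneg_and_le_succ hk hξ j
    rw [cfQ_add_two]
    rcases hξ (j+1) with h | h
    · rw [h]
      linarith
    · have hkj : (2 : ℤ) ≤ k (j+1) := by exact_mod_cast hadm h
      have h3 := (cfQ_succ_bounds hk hξ j).1
      rw [h]
      nlinarith

lemma eq_add_mul_sub_of_add_eq_two_mul {R : Type*} [CommRing R] {v : ℕ → R} {N : ℕ}
    (hv : ∀ i < N, v (i+2) + v i = 2 * v (i+1)) {i : ℕ} (hi : i ≤ N + 1) :
    v i = v 0 + i * (v 1 - v 0) := by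
  have key (i : ℕ) (hi : i ≤ N) :
      v i = v 0 + i * (v 1 - v 0) ∧ v (i+1) = v 0 + (i+1) * (v 1 - v 0) := by
    induction i with
    | zero => constructor <;> simp
    | succ i ih =>
      obtain ⟨h0, h1⟩ := ih (by omega)
      refine ⟨by rw [h1]; push_cast; ring, ?_⟩
      push_cast
      linear_combination hv i (by omega) - h0 + 2 * h1
  rcases i with _ | i
  · simp
  · exact_mod_cast (key i (by omega)).2

lemma cfQ_block_growth (hk : ∀ j, 1 ≤ k j) (hξ : ∀ j, ξ j = 1 ∨ ξ j = -1) {a h : ℕ}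
    (hadm : ξ a = -1 → 2 ≤ k a) (hblock : ∀ i < h, k (a+i+1) = 1 ∧ ξ (a+i+1) = -1) :
    (h + 1) * cfQ k ξ a ≤ 2 * cfQ k ξ (a+h) ∧ cfQ k ξ (a+h) ≤ 2 * (h + 1) * cfQ k ξ a := by
  obtain ⟨hq, -⟩ := cfQ_nonneg_and_le_succ hk hξ a
  rcases Nat.eq_zero_or_pos h with rfl | hpos
  · simp only [Nat.cast_zero, add_zero]
    constructor <;> linarith
  obtain ⟨hk₁, -⟩ := hblock 0 hpos
  rw [add_zero] at hk₁
  have hd₁ := cfQ_succ_lower_of_admissible hk hξ hadm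
  have hd₂ := (cfQ_succ_bounds hk hξ a).2
  rw [hk₁, Nat.cast_one] at hd₁ hd₂
  have hap := eq_add_mul_sub_of_add_eq_two_mul (v := fun i => cfQ k ξ (a+i)) (N := h-1)
    (fun i hi => by
      obtain ⟨hk', -⟩ := hblock (i+1) (by omega)
      obtain ⟨-, hξ'⟩ := hblock i (by omega)
      have e := cfQ_add_two k ξ (a+i)
      rw [show a + (i+1) + 1 = a + i + 2 by ring] at hk'
      rw [hk', hξ'] at e
      show cfQ k ξ (a + (i+2)) + cfQ k ξ (a+i) = 2 * cfQ k ξ (a + (i+1))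
      rw [show a + (i+2) = a + i + 2 by ring, show a + (i+1) = a + i + 1 by ring, e]
      push_cast
      ring) (i := h) (by omega)
  simp only [add_zero] at hap
  rw [hap]
  have hh : (0:ℤ) ≤ h := by positivity
  constructor
  · nlinarith [mul_nonneg hh (by linarith : (0:ℤ) ≤ 3 * cfQ k ξ (a+1) - 5 * cfQ k ξ a)]
  · nlinarith [mul_nonneg hh (by linarith : (0:ℤ) ≤ 3 * cfQ k ξ a - cfQ k ξ (a+1))]

lemma cfQ_block_bounds (hk : ∀ j, 1 ≤ k j) (hξ : ∀ j, ξ j = 1 ∨ ξ j = -1) {a h : ℕ}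
    (hadm : ξ a = -1 → 2 ≤ k a) (hblock : ∀ i < h, k (a+i+1) = 1 ∧ ξ (a+i+1) = -1) :
    k (a+h+1) * (h + 1) * cfQ k ξ a ≤ 2 * cfQ k ξ (a+h+1) ∧
      cfQ k ξ (a+h+1) ≤ 6 * k (a+h+1) * (h + 1) * cfQ k ξ a := by
  obtain ⟨g₁, g₂⟩ := cfQ_block_growth hk hξ hadm hblock
  obtain ⟨s₁, s₂⟩ := cfQ_succ_bounds hk hξ (a+h)
  obtain ⟨hqa, -⟩ := cfQ_nonneg_and_le_succ hk hξ a
  obtain ⟨hq, -⟩ := cfQ_nonneg_and_le_succ hk hξ (a+h)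
  have hm : (1:ℤ) ≤ k (a+h+1) := by exact_mod_cast hk _
  set m : ℤ := (k (a+h+1) : ℤ)
  constructor
  · calc m * (h + 1) * cfQ k ξ a = m * ((h + 1) * cfQ k ξ a) := by ring
      _ ≤ m * (2 * cfQ k ξ (a+h)) := by gcongr
      _ ≤ 2 * ((2 * m - 1) * cfQ k ξ (a+h)) := by nlinarith
      _ ≤ 2 * cfQ k ξ (a+h+1) := by linarith
  · calc cfQ k ξ (a+h+1) ≤ (2 * m + 1) * cfQ k ξ (a+h) := s₂
      _ ≤ (2 * m + 1) * (2 * (h + 1) * cfQ k ξ a) := by gcongr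
      _ ≤ 3 * m * (2 * (h + 1) * cfQ k ξ a) := by gcongr; linarith
      _ = 6 * m * (h + 1) * cfQ k ξ a := by ring

end Denominators

lemma ecfQ_ecfNu_succ_bounds {x : ℝ} (hx : x ∈ ECFdom) (n : ℕ) :
    (1/2 : ℝ) * sigmaM x (n+1) * ((sigmaH x (n+1) : ℝ) + 1) * (ecfQ x (ecfNu x n - 1) : ℝ)
        ≤ (ecfQ x (ecfNu x (n+1) - 1) : ℝ) ∧
      (ecfQ x (ecfNu x (n+1) - 1) : ℝ)
        ≤ 6 * sigmaM x (n+1) * ((sigmaH x (n+1) : ℝ) + 1) * (ecfQ x (ecfNu x n - 1) : ℝ) := by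
  obtain ⟨h₁, h₂⟩ := cfQ_block_bounds (one_le_ecfDigK hx) (ecfDigXi_eq_one_or_eq_neg_one x)
    (two_le_ecfDigK_of_ecfDigXi_eq_neg_one hx n)
    (fun i hi => ecfDigK_ecfDigXi_of_lt_ecfTau hx n hi)
  rw [← ecfNu_succ_sub_one] at h₁ h₂
  simp only [sigmaM, sigmaH, Nat.add_sub_cancel]
  have h₁' : (ecfDigK x (ecfNu x (n+1) - 1) : ℝ) * ((ecfTau (ecfR^[n] x) : ℝ) + 1)
      * (ecfQ x (ecfNu x n - 1) : ℝ) ≤ 2 * (ecfQ x (ecfNu x (n+1) - 1) : ℝ) := by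
    exact_mod_cast h₁
  exact ⟨by linarith, by exact_mod_cast h₂⟩

lemma pow_mul_prod_bounds_of_succ_bounds {a c : ℕ → ℝ} {α β : ℝ} (hα : 0 ≤ α) (hβ : 0 ≤ β)
    (hc : ∀ n, 0 ≤ c n) (h : ∀ n, α * c (n+1) * a n ≤ a (n+1) ∧ a (n+1) ≤ β * c (n+1) * a n)
    (n : ℕ) :
    α ^ n * (∏ j ∈ Finset.Icc 1 n, c j) * a 0 ≤ a n ∧
      a n ≤ β ^ n * (∏ j ∈ Finset.Icc 1 n, c j) * a 0 := by
  induction n with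
  | zero => simp
  | succ n ih =>
    rw [Finset.prod_Icc_succ_top (by omega), pow_succ]
    obtain ⟨l, u⟩ := h n
    constructor
    · calc _ = α * c (n+1) * (α ^ n * (∏ j ∈ Finset.Icc 1 n, c j) * a 0) := by ring
        _ ≤ α * c (n+1) * a n := mul_le_mul_of_nonneg_left ih.1 (mul_nonneg hα (hc _))
        _ ≤ a (n+1) := l
    · calc a (n+1) ≤ β * c (n+1) * a n := u
        _ ≤ β * c (n+1) * (β ^ n * (∏ j ∈ Finset.Icc 1 n, c j) * a 0) :=
          mul_le_mul_of_nonneg_left ih.2 (mul_nonneg hβ (hc _))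
        _ = _ := by ring

/-- Two-sided estimate on the denominators `q_{ν_n - 1}` in terms of the Σ-coding
`σ_j(x) = (h_j, (m_j, ε_j))`. -/
theorem ecf_q_nu_sub_one_estimates :
    ∀ x ∈ ECFdom, ∀ n : ℕ, 1 ≤ n →
      ((1/2 : ℝ) * (sigmaM x n) * ((sigmaH x n : ℝ) + 1) * (ecfQ x (ecfNu x (n-1) - 1) : ℝ)
          ≤ (ecfQ x (ecfNu x n - 1) : ℝ) ∧
        (ecfQ x (ecfNu x n - 1) : ℝ)
          ≤ 6 * (sigmaM x n) * ((sigmaH x n : ℝ) + 1) * (ecfQ x (ecfNu x (n-1) - 1) : ℝ)) ∧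
      ((1 / 2 ^ n : ℝ) * ∏ j ∈ Finset.Icc 1 n, ((sigmaM x j : ℝ) * ((sigmaH x j : ℝ) + 1))
          ≤ (ecfQ x (ecfNu x n - 1) : ℝ) ∧
        (ecfQ x (ecfNu x n - 1) : ℝ)
          ≤ (6 ^ n : ℝ) * ∏ j ∈ Finset.Icc 1 n, ((sigmaM x j : ℝ) * ((sigmaH x j : ℝ) + 1))) := by
  intro x hx n hn
  have hprod := pow_mul_prod_bounds_of_succ_bounds
    (a := fun j => (ecfQ x (ecfNu x j - 1) : ℝ))
    (c := fun j => (sigmaM x j : ℝ) * ((sigmaH x j : ℝ) + 1))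
    (by norm_num : (0:ℝ) ≤ 1/2) (by norm_num : (0:ℝ) ≤ 6) (fun j => by positivity)
    (fun j => by simpa only [mul_assoc] using ecfQ_ecfNu_succ_bounds hx j) n
  have hq₀ : ecfQ x (ecfNu x 0 - 1) = 1 := rfl
  obtain ⟨k, rfl⟩ : ∃ k, n = k + 1 := ⟨n - 1, by omega⟩
  refine ⟨by simpa only [Nat.add_sub_cancel] using ecfQ_ecfNu_succ_bounds hx k, ?_⟩
  simpa only [hq₀, Int.cast_one, mul_one, one_div_pow] using hprod
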